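/- Let β > 1. The set E_{0,1} = {x ∈ [0,1] : lim inf_{n→∞} r_n(x,β)/n = 0 and lim sup_{n→∞} r_n(x,β)/n = 1} is residual in [0,1], i.e., its complement is of the first Baire category. -/

import Mathlib

/-!
For fixed `k` and `N`, the points with some `n ≥ N` and `r_n / n ≥ 1 - 1/(k+1)`, and those with
some `n ≥ N` and `r_n / n ≤ 1/(k+1)`, contain dense open subsets of `[0, 1]`; the countable
intersection of these is residual and lies in `E_{0,1}`.

Density: dropping the tail of the expansion approximates any `x` from below within `β⁻ᴺ` by a `y`
with `T^N y = 0`. For `M` large, `[y, y + β⁻ᴹ)` is a full cylinder, mapped affinely onto `[0, 1)`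
by `T^M` without changing the first `M` digits. All its points have the zero run of digits
`N + 1, …, M`, so `r_M / M ≥ 1 - N / M`. Appending instead `r` blocks `1 0 ⋯ 0` of length `P` to `y`
gives a full cylinder of order `M + r P` on which no zero run exceeds `M + P`.
-/

open Filter MeasureTheory Set

noncomputable def betaT (β : ℝ) (x : ℝ) : ℝ := β * x - ⌊β * x⌋

noncomputable def eps (β x : ℝ) (n : ℕ) : ℤ := ⌊β * (betaT β)^[n - 1] x⌋

noncomputable def runLen (β x : ℝ) (n : ℕ) : ℕ :=
  sSup {j | ∃ i, i + j ≤ n ∧ ∀ k < j, eps β x (i + k + 1) = 0}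

def isAdmissible (β : ℝ) (n : ℕ) (ω : ℕ → ℤ) : Prop :=
  ∃ x ∈ Set.Ico (0 : ℝ) 1, ∀ k < n, eps β x (k + 1) = ω k

def cylinder (β : ℝ) (n : ℕ) (ω : ℕ → ℤ) : Set ℝ :=
  {x | x ∈ Set.Ico (0 : ℝ) 1 ∧ ∀ k < n, eps β x (k + 1) = ω k}

def isFull (β : ℝ) (n : ℕ) (ω : ℕ → ℤ) : Prop :=
  MeasureTheory.volume (cylinder β n ω) = ENNReal.ofReal (β ^ (-(n : ℤ)))

open Classical in
noncomputable def epsStar (β : ℝ) : ℕ → ℤ :=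
  if h : ∃ m, 1 ≤ m ∧ eps β 1 m ≠ 0 ∧ ∀ k, m < k → eps β 1 k = 0 then
    fun n =>
      if (n - 1) % Nat.find h + 1 = Nat.find h then eps β 1 (Nat.find h) - 1
      else eps β 1 ((n - 1) % Nat.find h + 1)
  else eps β 1

def lexLt (u v : ℕ → ℤ) : Prop := ∃ j, (∀ k < j, u k = v k) ∧ u j < v j

def lexLe (u v : ℕ → ℤ) : Prop := lexLt u v ∨ u = v

noncomputable def vbeta (β x : ℝ) : ℝ :=
  sSup {v | 0 ≤ v ∧ ∃ᶠ n : ℕ in atTop, (betaT β)^[n] x ≤ β ^ (-((n : ℝ) * v))}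

noncomputable def hatv (β x : ℝ) : ℝ :=
  sSup {v | 0 ≤ v ∧ ∀ᶠ N : ℕ in atTop, ∃ n, 1 ≤ n ∧ n ≤ N ∧ (betaT β)^[n] x ≤ β ^ (-(v * (N : ℝ)))}

open Topology

section BetaTransformation

variable {β : ℝ}

lemma betaT_apply (x : ℝ) : betaT β x = Int.fract (β * x) := rfl

lemma betaT_iterate_nonneg {x : ℝ} (hx : 0 ≤ x) : ∀ j, 0 ≤ (betaT β)^[j] x
  | 0 => hx
  | j + 1 => by rw [Function.iterate_succ_apply']; exact Int.fract_nonneg _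

lemma betaT_iterate_lt_one {x : ℝ} (hx : x < 1) : ∀ j, (betaT β)^[j] x < 1
  | 0 => hx
  | j + 1 => by rw [Function.iterate_succ_apply']; exact Int.fract_lt_one _

lemma betaT_iterate_eq_zero_of_le {x : ℝ} {N j : ℕ} (hN : (betaT β)^[N] x = 0) (hj : N ≤ j) :
    (betaT β)^[j] x = 0 := by
  obtain ⟨m, rfl⟩ := Nat.exists_eq_add_of_le hj
  rw [add_comm, Function.iterate_add_apply, hN]
  exact Function.iterate_fixed (by simp [betaT]) m

lemma betaT_iterate_le_pow_mul (hβ : 0 ≤ β) {x : ℝ} (hx : 0 ≤ x) :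
    ∀ m, (betaT β)^[m] x ≤ β ^ m * x
  | 0 => by simp
  | m + 1 => by
    have hfloor : (0 : ℝ) ≤ ⌊β * (betaT β)^[m] x⌋ :=
      Int.cast_nonneg (Int.floor_nonneg.2 (mul_nonneg hβ (betaT_iterate_nonneg hx m)))
    calc (betaT β)^[m + 1] x = β * (betaT β)^[m] x - ⌊β * (betaT β)^[m] x⌋ :=
          Function.iterate_succ_apply' ..
      _ ≤ β * (β ^ m * x) := by
          nlinarith [mul_le_mul_of_nonneg_left (betaT_iterate_le_pow_mul hβ hx m) hβ]
      _ = β ^ (m + 1) * x := by ring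

lemma eps_succ (x : ℝ) (k : ℕ) : eps β x (k + 1) = ⌊β * (betaT β)^[k] x⌋ := rfl

lemma eps_add_succ (x : ℝ) (m k : ℕ) :
    eps β x (m + k + 1) = eps β ((betaT β)^[m] x) (k + 1) := by
  rw [eps_succ, eps_succ, add_comm m k, Function.iterate_add_apply]

lemma eps_eq_zero_of_iterate_eq_zero {x : ℝ} {N k : ℕ} (hN : (betaT β)^[N] x = 0) (hk : N ≤ k) :
    eps β x (k + 1) = 0 := by
  simp [eps_succ, betaT_iterate_eq_zero_of_le hN hk]

lemma mul_betaT_iterate_add_pow_mul (x δ : ℝ) (j : ℕ) :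
    β * ((betaT β)^[j] x + β ^ j * δ) =
      ⌊β * (betaT β)^[j] x⌋ + ((betaT β)^[j + 1] x + β ^ (j + 1) * δ) := by
  rw [Function.iterate_succ_apply', betaT]
  ring

lemma betaT_iterate_add {x δ : ℝ} {M : ℕ}
    (h : ∀ j < M, (betaT β)^[j + 1] x + β ^ (j + 1) * δ ∈ Ico (0 : ℝ) 1) :
    ∀ j ≤ M, (betaT β)^[j] (x + δ) = (betaT β)^[j] x + β ^ j * δ
  | 0, _ => by simp
  | j + 1, hj => by
    rw [Function.iterate_succ_apply', betaT_iterate_add h j (by omega), betaT_apply,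
      mul_betaT_iterate_add_pow_mul, Int.fract_intCast_add, Int.fract_eq_self.2 (h j hj)]

lemma eps_add_of_lt {x δ : ℝ} {M : ℕ}
    (h : ∀ j < M, (betaT β)^[j + 1] x + β ^ (j + 1) * δ ∈ Ico (0 : ℝ) 1) {k : ℕ} (hk : k < M) :
    eps β (x + δ) (k + 1) = eps β x (k + 1) := by
  rw [eps_succ, eps_succ, betaT_iterate_add h k hk.le, mul_betaT_iterate_add_pow_mul,
    Int.floor_intCast_add, Int.floor_eq_zero_iff.2 (h k hk), add_zero]

lemma exists_iterate_eq_zero_near (hβ : 1 < β) {x : ℝ} (hx : x ∈ Ico (0 : ℝ) 1) (N : ℕ) :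
    ∃ y ∈ Icc 0 x, x < y + (β ^ N)⁻¹ ∧ (betaT β)^[N] y = 0 := by
  have hβ0 : 0 < β := zero_lt_one.trans hβ
  have hTN : (betaT β)^[N] x ∈ Ico (0 : ℝ) 1 :=
    ⟨betaT_iterate_nonneg hx.1 N, betaT_iterate_lt_one hx.2 N⟩
  -- greedy truncation: the tail `T^[N] x` carries weight `β⁻ᴺ` in `x`
  have hle : ∀ j ≤ N, β ^ j * ((β ^ N)⁻¹ * (betaT β)^[N] x) ≤ (betaT β)^[j] x := by
    intro j hj
    obtain ⟨m, rfl⟩ := Nat.exists_eq_add_of_le hj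
    have := betaT_iterate_le_pow_mul hβ0.le (betaT_iterate_nonneg (β := β) hx.1 j) m
    rw [add_comm j m, Function.iterate_add_apply]
    calc β ^ j * ((β ^ (m + j))⁻¹ * (betaT β)^[m] ((betaT β)^[j] x))
        ≤ β ^ j * ((β ^ (m + j))⁻¹ * (β ^ m * (betaT β)^[j] x)) := by gcongr
      _ = (betaT β)^[j] x := by field_simp; ring
  have h : ∀ j < N, (betaT β)^[j + 1] x + β ^ (j + 1) * -((β ^ N)⁻¹ * (betaT β)^[N] x) ∈
      Ico (0 : ℝ) 1 := by
    intro j hj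
    have := hle (j + 1) hj
    have : 0 ≤ β ^ (j + 1) * ((β ^ N)⁻¹ * (betaT β)^[N] x) := by have := hTN.1; positivity
    constructor <;> nlinarith [betaT_iterate_lt_one (β := β) hx.2 (j + 1)]
  refine ⟨x + -((β ^ N)⁻¹ * (betaT β)^[N] x), ⟨?_, ?_⟩, ?_, ?_⟩
  · simpa using hle 0 (Nat.zero_le N)
  · have := hTN.1
    have : 0 ≤ (β ^ N)⁻¹ * (betaT β)^[N] x := by positivity
    linarith
  · have : (β ^ N)⁻¹ * (betaT β)^[N] x < (β ^ N)⁻¹ := mul_lt_of_lt_one_right (by positivity) hTN.2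
    linarith
  · rw [betaT_iterate_add h N le_rfl]
    field_simp
    ring

end BetaTransformation

/-- `[y, y + β⁻ᴹ)` is a full cylinder of order `M`: `T^[M]` maps it affinely onto `[0, 1)` and all
its points share the first `M` digits of `y` (`IsFullCylinderBase.betaT_iterate_add`, `.eps_add`). -/
def IsFullCylinderBase (β : ℝ) (M : ℕ) (y : ℝ) : Prop :=
  0 ≤ y ∧ ∀ j ≤ M, (betaT β)^[j] y + β ^ j * (β ^ M)⁻¹ ≤ 1

namespace IsFullCylinderBase

variable {β : ℝ} {M : ℕ} {y t : ℝ}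

lemma zero : IsFullCylinderBase β 0 0 :=
  ⟨le_rfl, fun j hj => by simp [Nat.le_zero.1 hj]⟩

lemma add_le_one (hy : IsFullCylinderBase β M y) : y + (β ^ M)⁻¹ ≤ 1 := by
  simpa using hy.2 0 (Nat.zero_le M)

lemma iterate_eq_zero (hβ : 0 < β) (hy : IsFullCylinderBase β M y) : (betaT β)^[M] y = 0 := by
  have := hy.2 M le_rfl
  rw [mul_inv_cancel₀ (pow_ne_zero M hβ.ne')] at this
  linarith [betaT_iterate_nonneg (β := β) hy.1 M]

lemma mem_Ico (hβ : 0 < β) (hy : IsFullCylinderBase β M y) : y ∈ Ico (0 : ℝ) 1 :=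
  ⟨hy.1, by linarith [hy.add_le_one, inv_pos.2 (pow_pos hβ M)]⟩

lemma iterate_add_mem_Ico (hβ : 0 < β) (hy : IsFullCylinderBase β M y) (ht : t ∈ Ico (0 : ℝ) 1) :
    ∀ j < M, (betaT β)^[j + 1] y + β ^ (j + 1) * ((β ^ M)⁻¹ * t) ∈ Ico (0 : ℝ) 1 := by
  intro j hj
  have hpos : 0 < β ^ (j + 1) * (β ^ M)⁻¹ := by positivity
  have := betaT_iterate_nonneg (β := β) hy.1 (j + 1)
  have := hy.2 (j + 1) hj
  constructor <;> nlinarith [ht.1, ht.2]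

lemma betaT_iterate_add (hβ : 0 < β) (hy : IsFullCylinderBase β M y) (ht : t ∈ Ico (0 : ℝ) 1)
    {j : ℕ} (hj : j ≤ M) :
    (betaT β)^[j] (y + (β ^ M)⁻¹ * t) = (betaT β)^[j] y + β ^ j * ((β ^ M)⁻¹ * t) :=
  _root_.betaT_iterate_add (hy.iterate_add_mem_Ico hβ ht) j hj

lemma eps_add (hβ : 0 < β) (hy : IsFullCylinderBase β M y) (ht : t ∈ Ico (0 : ℝ) 1) {k : ℕ}
    (hk : k < M) : eps β (y + (β ^ M)⁻¹ * t) (k + 1) = eps β y (k + 1) :=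
  eps_add_of_lt (hy.iterate_add_mem_Ico hβ ht) hk

lemma betaT_iterate_add_self (hβ : 0 < β) (hy : IsFullCylinderBase β M y)
    (ht : t ∈ Ico (0 : ℝ) 1) : (betaT β)^[M] (y + (β ^ M)⁻¹ * t) = t := by
  rw [hy.betaT_iterate_add hβ ht le_rfl, hy.iterate_eq_zero hβ, ← mul_assoc,
    mul_inv_cancel₀ (pow_ne_zero M hβ.ne'), zero_add, one_mul]

lemma eps_of_mem_Ico (hβ : 0 < β) (hy : IsFullCylinderBase β M y) {w : ℝ}
    (hw : w ∈ Ico y (y + (β ^ M)⁻¹)) {k : ℕ} (hk : k < M) : eps β w (k + 1) = eps β y (k + 1) := by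
  have hM : 0 < β ^ M := pow_pos hβ M
  have ht : (w - y) * β ^ M ∈ Ico (0 : ℝ) 1 := by
    constructor
    · nlinarith [hw.1]
    · calc (w - y) * β ^ M < (β ^ M)⁻¹ * β ^ M := by gcongr; linarith [hw.2]
        _ = 1 := inv_mul_cancel₀ hM.ne'
  have hw' : w = y + (β ^ M)⁻¹ * ((w - y) * β ^ M) := by field_simp; ring
  rw [hw', hy.eps_add hβ ht hk]

lemma concat (hβ : 0 < β) {P : ℕ} {z : ℝ} (hy : IsFullCylinderBase β M y)
    (hz : IsFullCylinderBase β P z) : IsFullCylinderBase β (M + P) (y + (β ^ M)⁻¹ * z) := by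
  have hzI := hz.mem_Ico hβ
  refine ⟨by have := hy.1; have := hzI.1; positivity, fun j hj => ?_⟩
  rcases le_or_gt j M with hjM | hMj
  · have hz1 : z + (β ^ P)⁻¹ ≤ 1 := hz.add_le_one
    have hpos : 0 ≤ β ^ j * (β ^ M)⁻¹ := by positivity
    calc (betaT β)^[j] (y + (β ^ M)⁻¹ * z) + β ^ j * (β ^ (M + P))⁻¹
        = (betaT β)^[j] y + β ^ j * (β ^ M)⁻¹ * (z + (β ^ P)⁻¹) := by
          rw [hy.betaT_iterate_add hβ hzI hjM, pow_add, mul_inv]; ring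
      _ ≤ (betaT β)^[j] y + β ^ j * (β ^ M)⁻¹ := by nlinarith
      _ ≤ 1 := hy.2 j hjM
  · obtain ⟨i, rfl⟩ := Nat.exists_eq_add_of_lt hMj
    rw [show M + i + 1 = (i + 1) + M by ring, Function.iterate_add_apply,
      hy.betaT_iterate_add_self hβ hzI]
    convert hz.2 (i + 1) (by omega) using 2
    rw [pow_add β M P]
    field_simp
    ring

lemma eventually_of_iterate_eq_zero (hβ : 1 < β) (hy : y ∈ Ico (0 : ℝ) 1) {N : ℕ} (hN : (betaT β)^[N] y = 0) :
    ∀ᶠ M in atTop, IsFullCylinderBase β M y := by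
  have hβ0 : 0 < β := zero_lt_one.trans hβ
  have hsmall : ∀ j < N, ∀ᶠ M in atTop, β ^ j * (β ^ M)⁻¹ ≤ 1 - (betaT β)^[j] y := by
    intro j _
    have hlim : Tendsto (fun M : ℕ => β ^ j * (β ^ M)⁻¹) atTop (𝓝 (β ^ j * 0)) := by
      simp_rw [← inv_pow]
      exact (tendsto_pow_atTop_nhds_zero_of_lt_one (inv_nonneg.2 hβ0.le)
        (inv_lt_one_of_one_lt₀ hβ)).const_mul _
    rw [mul_zero] at hlim
    exact hlim.eventually (eventually_le_nhds (by linarith [betaT_iterate_lt_one (β := β) hy.2 j]))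
  filter_upwards [(eventually_all_finite (Set.finite_lt_nat N)).2 hsmall, eventually_ge_atTop N]
    with M hM hNM
  refine ⟨hy.1, fun j hj => ?_⟩
  rcases lt_or_ge j N with hjN | hNj
  · linarith [hM j hjN]
  · rw [betaT_iterate_eq_zero_of_le hN hNj, zero_add,
      ← div_eq_mul_inv, div_le_one (pow_pos hβ0 M)]
    exact pow_le_pow_right₀ hβ.le hj

end IsFullCylinderBase

section RunLength

variable {β : ℝ}

lemma runLen_le_of_forall {x : ℝ} {n B : ℕ}
    (h : ∀ i j, i + j ≤ n → (∀ k < j, eps β x (i + k + 1) = 0) → j ≤ B) : runLen β x n ≤ B :=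
  csSup_le ⟨0, 0, by simp⟩ fun j ⟨i, hij, hzero⟩ => h i j hij hzero

lemma runLen_le_self (x : ℝ) (n : ℕ) : runLen β x n ≤ n :=
  runLen_le_of_forall fun _ _ hij _ => by omega

lemma le_runLen {x : ℝ} {n i j : ℕ} (hij : i + j ≤ n) (hzero : ∀ k < j, eps β x (i + k + 1) = 0) :
    j ≤ runLen β x n :=
  le_csSup ⟨n, fun _ ⟨_, h, _⟩ => by omega⟩ ⟨i, hij, hzero⟩

lemma runLen_le_of_eps_ne_zero {x : ℝ} {M P r : ℕ} (hP : 0 < P)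
    (h : ∀ q < r, eps β x (M + q * P + 1) ≠ 0) : runLen β x (M + r * P) ≤ M + P := by
  refine runLen_le_of_forall fun i j hij hzero => ?_
  by_contra! hj
  -- the first marker at or after position `i + 1`
  set q := (i - M + P - 1) / P
  have hq₁ : q * P ≤ i - M + P - 1 := Nat.div_mul_le_self _ P
  have hq₂ : i - M + P - 1 < q * P + P := Nat.lt_div_mul_add hP
  have hqr : q < r := Nat.lt_of_mul_lt_mul_right (a := P) (by omega)
  have := hzero (M + q * P - i) (by omega)
  rw [show i + (M + q * P - i) + 1 = M + q * P + 1 by omega] at this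
  exact h q hqr this

end RunLength

/-- The point with β-expansion `(1 0 ⋯ 0)ʳ`, blocks of length `P`, once `β⁻¹` is a full cylinder
base of order `P`. -/
noncomputable def onesEvery (β : ℝ) (P : ℕ) : ℕ → ℝ
  | 0 => 0
  | r + 1 => β⁻¹ + (β ^ P)⁻¹ * onesEvery β P r

section OnesEvery

variable {β : ℝ} {P : ℕ}

lemma isFullCylinderBase_onesEvery (hβ : 0 < β) (hP : IsFullCylinderBase β P β⁻¹) :
    ∀ r, IsFullCylinderBase β (r * P) (onesEvery β P r)
  | 0 => by simpa [onesEvery] using IsFullCylinderBase.zero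
  | r + 1 => by
    rw [Nat.succ_mul, add_comm]
    exact hP.concat hβ (isFullCylinderBase_onesEvery hβ hP r)

lemma eps_onesEvery (hβ : 0 < β) (hP : IsFullCylinderBase β P β⁻¹) (hP0 : 0 < P) :
    ∀ r, ∀ q < r, eps β (onesEvery β P r) (q * P + 1) = 1
  | r + 1, 0, _ => by
    rw [zero_mul, onesEvery, hP.eps_add hβ ((isFullCylinderBase_onesEvery hβ hP r).mem_Ico hβ) hP0]
    simp [eps_succ, mul_inv_cancel₀ hβ.ne']
  | r + 1, q + 1, hq => by
    rw [show (q + 1) * P + 1 = P + q * P + 1 by ring, eps_add_succ, onesEvery,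
      hP.betaT_iterate_add_self hβ ((isFullCylinderBase_onesEvery hβ hP r).mem_Ico hβ)]
    exact eps_onesEvery hβ hP hP0 r q (by omega)

lemma exists_isFullCylinderBase_inv (hβ : 1 < β) : ∃ P, 0 < P ∧ IsFullCylinderBase β P β⁻¹ := by
  have hβ0 : 0 < β := zero_lt_one.trans hβ
  have hT : (betaT β)^[1] β⁻¹ = 0 := by simp [betaT_apply, mul_inv_cancel₀ hβ0.ne']
  obtain ⟨P, hP1, hP⟩ := ((eventually_ge_atTop 1).and (IsFullCylinderBase.eventually_of_iterate_eq_zero hβ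
    ⟨inv_nonneg.2 hβ0.le, inv_lt_one_of_one_lt₀ hβ⟩ hT)).exists
  exact ⟨P, hP1, hP⟩

end OnesEvery

def longRunSet (β : ℝ) (k N : ℕ) : Set ℝ :=
  {x | ∃ n ≥ N, 1 - 1 / ((k : ℝ) + 1) ≤ (runLen β x n : ℝ) / n}

def shortRunSet (β : ℝ) (k N : ℕ) : Set ℝ :=
  {x | ∃ n ≥ N, (runLen β x n : ℝ) / n ≤ 1 / ((k : ℝ) + 1)}

section Cylinders

variable {β : ℝ}

lemma exists_Ioo_subset_longRunSet (hβ : 1 < β) (k N' : ℕ) {y : ℝ} (hy : y ∈ Ico (0 : ℝ) 1)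
    {N : ℕ} (hN : (betaT β)^[N] y = 0) :
    ∃ a b, a < b ∧ Ioo a b ⊆ longRunSet β k N' ∩ Ico y (y + (β ^ N)⁻¹) := by
  have hβ0 : 0 < β := zero_lt_one.trans hβ
  obtain ⟨M, hM, hMN', hMk, hM1⟩ := ((IsFullCylinderBase.eventually_of_iterate_eq_zero hβ hy hN).and
    ((eventually_ge_atTop N').and ((eventually_ge_atTop ((k + 1) * N)).and
    (eventually_ge_atTop 1)))).exists
  have hMN : N ≤ M := le_trans (Nat.le_mul_of_pos_left N k.succ_pos) hMk
  refine ⟨y, y + (β ^ M)⁻¹, by simp [hβ0], fun w hw => ⟨⟨M, hMN', ?_⟩, ?_⟩⟩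
  · have hrun : M - N ≤ runLen β w M := le_runLen (i := N) (by omega) fun i hi => by
      rw [hM.eps_of_mem_Ico hβ0 (Ioo_subset_Ico_self hw) (by omega),
        eps_eq_zero_of_iterate_eq_zero hN (by omega)]
    have hrun' : (M : ℝ) - N ≤ runLen β w M := by rw [← Nat.cast_sub hMN]; exact_mod_cast hrun
    have hNM : (N : ℝ) ≤ M / ((k : ℝ) + 1) := by
      rw [le_div_iff₀ (by positivity)]; exact_mod_cast (by linarith : N * (k + 1) ≤ M)
    rw [le_div_iff₀ (by exact_mod_cast hM1)]
    calc (1 - 1 / ((k : ℝ) + 1)) * M = M - M / ((k : ℝ) + 1) := by ring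
      _ ≤ runLen β w M := by linarith
  · exact ⟨hw.1.le, hw.2.trans_le (add_le_add_right (inv_pow_le_inv_pow_of_le hβ.le hMN) y)⟩

lemma exists_Ioo_subset_shortRunSet (hβ : 1 < β) (k N' : ℕ) {y : ℝ} (hy : y ∈ Ico (0 : ℝ) 1)
    {N : ℕ} (hN : (betaT β)^[N] y = 0) :
    ∃ a b, a < b ∧ Ioo a b ⊆ shortRunSet β k N' ∩ Ico y (y + (β ^ N)⁻¹) := by
  have hβ0 : 0 < β := zero_lt_one.trans hβ
  obtain ⟨P, hP0, hP⟩ := exists_isFullCylinderBase_inv hβ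
  obtain ⟨M, hM, hMN⟩ :=
    ((IsFullCylinderBase.eventually_of_iterate_eq_zero hβ hy hN).and (eventually_ge_atTop N)).exists
  set r := N' + (k + 1) * (M + P)
  have hu := isFullCylinderBase_onesEvery hβ0 hP r
  set Z := y + (β ^ M)⁻¹ * onesEvery β P r
  have hZ : IsFullCylinderBase β (M + r * P) Z := hM.concat hβ0 hu
  have hmark : ∀ q < r, eps β Z (M + q * P + 1) = 1 := fun q hq => by
    rw [eps_add_succ, hM.betaT_iterate_add_self hβ0 (hu.mem_Ico hβ0)]
    exact eps_onesEvery hβ0 hP hP0 r q hq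
  have hrP : r ≤ r * P := Nat.le_mul_of_pos_right r hP0
  have hr : (k + 1) * (M + P) ≤ r := Nat.le_add_left _ _
  have hr0 : 0 < (k + 1) * (M + P) := Nat.mul_pos k.succ_pos (by omega)
  refine ⟨Z, Z + (β ^ (M + r * P))⁻¹, by simp [hβ0], fun w hw => ⟨⟨M + r * P, by omega, ?_⟩, ?_⟩⟩
  · have hrun : runLen β w (M + r * P) ≤ M + P := runLen_le_of_eps_ne_zero hP0 fun q hq => by
      rw [hZ.eps_of_mem_Ico hβ0 (Ioo_subset_Ico_self hw)
        (by have := Nat.mul_lt_mul_of_pos_right hq hP0; omega), hmark q hq]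
      exact one_ne_zero
    have hn : (M + P) * (k + 1) ≤ M + r * P := by rw [mul_comm]; omega
    rw [div_le_div_iff₀ (by exact_mod_cast (by omega : 0 < M + r * P)) (by positivity), one_mul]
    exact_mod_cast (Nat.mul_le_mul_right (k + 1) hrun).trans hn
  · have hZ1 : Z + (β ^ (M + r * P))⁻¹ ≤ y + (β ^ M)⁻¹ := by
      have := hu.add_le_one
      calc Z + (β ^ (M + r * P))⁻¹ = y + (β ^ M)⁻¹ * (onesEvery β P r + (β ^ (r * P))⁻¹) := by
            rw [pow_add, mul_inv]; ring
        _ ≤ y + (β ^ M)⁻¹ * 1 := by gcongr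
        _ = y + (β ^ M)⁻¹ := by rw [mul_one]
    have hyZ : y ≤ Z := le_add_of_nonneg_right (mul_nonneg (by positivity) hu.1)
    exact ⟨hyZ.trans hw.1.le, hw.2.trans_le
      (hZ1.trans (add_le_add_right (inv_pow_le_inv_pow_of_le hβ.le hMN) y))⟩

end Cylinders

section Baire

variable {β : ℝ}

lemma Ico_subset_closure_inter_interior (hβ : 1 < β) {U : Set ℝ}
    (hU : ∀ y ∈ Ico (0 : ℝ) 1, ∀ N, (betaT β)^[N] y = 0 →
      ∃ a b, a < b ∧ Ioo a b ⊆ U ∩ Ico y (y + (β ^ N)⁻¹)) :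
    Ico (0 : ℝ) 1 ⊆ closure (Ico 0 1 ∩ interior U) := by
  intro x hx
  rw [Metric.mem_closure_iff]
  intro ε hε
  obtain ⟨N, hN⟩ := exists_pow_lt_of_lt_one (lt_min hε (sub_pos.2 hx.2)) (inv_lt_one_of_one_lt₀ hβ)
  rw [inv_pow, lt_min_iff] at hN
  obtain ⟨y, ⟨hy0, hyx⟩, hxy, hyN⟩ := exists_iterate_eq_zero_near hβ hx N
  obtain ⟨a, b, hab, hsub⟩ := hU y ⟨hy0, hyx.trans_lt hx.2⟩ N hyN
  have hz : (a + b) / 2 ∈ Ioo a b := ⟨by linarith, by linarith⟩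
  have hzy := (hsub hz).2
  refine ⟨(a + b) / 2, ⟨⟨hy0.trans hzy.1, by linarith [hzy.2]⟩,
    interior_maximal (hsub.trans inter_subset_left) isOpen_Ioo hz⟩, ?_⟩
  rw [Real.dist_eq, abs_sub_lt_iff]
  constructor <;> linarith [hzy.1, hzy.2]

lemma eventually_residual_Icc_mem (hβ : 1 < β) {U : Set ℝ}
    (hU : ∀ y ∈ Ico (0 : ℝ) 1, ∀ N, (betaT β)^[N] y = 0 →
      ∃ a b, a < b ∧ Ioo a b ⊆ U ∩ Ico y (y + (β ^ N)⁻¹)) :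
    ∀ᶠ x : Icc (0 : ℝ) 1 in residual _, (x : ℝ) ∈ U := by
  have hdense : Dense ((↑) ⁻¹' interior U : Set (Icc (0 : ℝ) 1)) := by
    rw [Subtype.dense_iff, Subtype.image_preimage_coe]
    calc Icc (0 : ℝ) 1 = closure (Ico 0 1) := (closure_Ico zero_ne_one).symm
      _ ⊆ closure (Ico 0 1 ∩ interior U) :=
          closure_minimal (Ico_subset_closure_inter_interior hβ hU) isClosed_closure
      _ ⊆ closure (Icc 0 1 ∩ interior U) :=
          closure_mono (inter_subset_inter_left _ Ico_subset_Icc_self)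
  exact mem_of_superset (residual_of_dense_open
    (isOpen_interior.preimage continuous_subtype_val) hdense) fun _ hx => interior_subset (s := U) hx

end Baire

lemma limsup_eq_one_of_frequently {f : ℕ → ℝ} (h0 : ∀ n, 0 ≤ f n) (h1 : ∀ n, f n ≤ 1)
    (h : ∀ k : ℕ, ∃ᶠ n in atTop, 1 - 1 / ((k : ℝ) + 1) ≤ f n) : limsup f atTop = 1 := by
  refine le_antisymm (limsup_le_of_le (isCoboundedUnder_le_of_le atTop h0)
    (Eventually.of_forall h1)) (le_of_forall_pos_le_add fun ε hε => ?_)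
  obtain ⟨k, hk⟩ := exists_nat_one_div_lt hε
  linarith [le_limsup_of_frequently_le (h k) (isBoundedUnder_of ⟨1, h1⟩)]

lemma liminf_eq_zero_of_frequently {f : ℕ → ℝ} (h0 : ∀ n, 0 ≤ f n) (h1 : ∀ n, f n ≤ 1)
    (h : ∀ k : ℕ, ∃ᶠ n in atTop, f n ≤ 1 / ((k : ℝ) + 1)) : liminf f atTop = 0 := by
  refine le_antisymm (le_of_forall_pos_le_add fun ε hε => ?_)
    (le_liminf_of_le (isCoboundedUnder_ge_of_le atTop h1) (Eventually.of_forall h0))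
  obtain ⟨k, hk⟩ := exists_nat_one_div_lt hε
  linarith [liminf_le_of_frequently_le (h k) (isBoundedUnder_of ⟨0, h0⟩)]

lemma runLen_div_le_one (β x : ℝ) (n : ℕ) : (runLen β x n : ℝ) / n ≤ 1 :=
  div_le_one_of_le₀ (by exact_mod_cast runLen_le_self x n) n.cast_nonneg

theorem stmt18 (β : ℝ) (hβ : 1 < β) :
    IsMeagre {x : Set.Icc (0 : ℝ) 1 |
      ¬ (Filter.liminf (fun n : ℕ => (runLen β (x : ℝ) n : ℝ) / n) Filter.atTop = 0 ∧
         Filter.limsup (fun n : ℕ => (runLen β (x : ℝ) n : ℝ) / n) Filter.atTop = 1)} := by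
  have hlong : ∀ k N, ∀ᶠ x : Icc (0 : ℝ) 1 in residual _, (x : ℝ) ∈ longRunSet β k N :=
    fun k N => eventually_residual_Icc_mem hβ fun _ hy _ hN =>
      exists_Ioo_subset_longRunSet hβ k N hy hN
  have hshort : ∀ k N, ∀ᶠ x : Icc (0 : ℝ) 1 in residual _, (x : ℝ) ∈ shortRunSet β k N :=
    fun k N => eventually_residual_Icc_mem hβ fun _ hy _ hN =>
      exists_Ioo_subset_shortRunSet hβ k N hy hN
  rw [IsMeagre, compl_ofPred]
  filter_upwards [eventually_countable_forall.2 fun k => eventually_countable_forall.2 (hlong k),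
    eventually_countable_forall.2 fun k => eventually_countable_forall.2 (hshort k)]
    with x hl hs
  have h0 : ∀ n : ℕ, 0 ≤ (runLen β (x : ℝ) n : ℝ) / n := fun n => by positivity
  exact not_not.2 ⟨liminf_eq_zero_of_frequently h0 (runLen_div_le_one β x)
    fun k => frequently_atTop.2 (hs k), limsup_eq_one_of_frequently h0 (runLen_div_le_one β x)
    fun k => frequently_atTop.2 (hl k)⟩
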